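/- Let K ≥ 1 and R ≥ 1, let g : Fin (K*R) → ZMod 2, and let G be the K × (K*R) circulant generator matrix over ZMod 2 with G i j = g(j - R*i mod K*R), with encoding map E(U) = Matrix.vecMul U G. Then for all source packets U^A, U^B : Fin K → ZMod 2 and every integral symbol misalignment τ : ℕ, the XOR of node A's codeword with the τ*R-bit right circularly shifted version of node B's codeword is itself a valid codeword, and its source packet is U^A ⊕ U^B_{(τ)}: E(U^A) + (E(U^B))_{(τ*R)} = E(U^A + U^B_{(τ)}). Consequently, in the presence of integral symbol misalignment τ, the Jt-CNC decoder outputs the network-coded packet U^R = U^A ⊕ U^B_{(τ)}. -/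

import Mathlib

/-!
Row `i` of `G` is `g` cyclically shifted by `R * i`, so `G` is block-circulant: moving row `i`
to row `i + τ` is the same as shifting the whole codeword by `τ * R`, because
`R * ((i + τ) % K) = R * (i + τ) % (K * R)`. Hence encoding commutes with the shifts, and the
theorem follows from linearity of `vecMul`.
-/

/-- Right cyclic shift of `v` by `s` positions: `(shiftR s v) j = v (j - s)`, index mod `n`. -/
def shiftR {n : ℕ} (s : ℕ) (v : Fin n → ZMod 2) : Fin n → ZMod 2 :=
  fun j => v ⟨(j.val + (n - s % n)) % n, Nat.mod_lt _ j.pos⟩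

open Fin.NatCast

theorem shiftR_mod {n : ℕ} (s : ℕ) (v : Fin n → ZMod 2) : shiftR (s % n) v = shiftR s v := by
  funext j
  simp only [shiftR, Nat.mod_mod]

theorem shiftR_apply {n : ℕ} [NeZero n] (s : ℕ) (v : Fin n → ZMod 2) (j : Fin n) :
    shiftR s v j = v (j - s) := by
  unfold shiftR
  congr 1
  ext
  simp [Fin.sub_def, Fin.val_natCast, Nat.add_comm]

theorem shiftR_add {n : ℕ} [NeZero n] (s t : ℕ) (v : Fin n → ZMod 2) :
    shiftR (s + t) v = shiftR s (shiftR t v) := by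
  ext j
  simp only [shiftR_apply, Nat.cast_add, sub_add_eq_sub_sub]

theorem shiftR_mul_val_add {K R : ℕ} [NeZero K] [NeZero R] (g : Fin (K * R) → ZMod 2)
    (i : Fin K) (τ : ℕ) :
    shiftR (R * (i + τ : Fin K).val) g = shiftR (τ * R) (shiftR (R * i.val) g) := by
  have hval : R * (i + τ : Fin K).val = (τ * R + R * i.val) % (K * R) := by
    rw [Fin.val_add, Fin.val_natCast, Nat.add_mod_mod, mul_comm K R, mul_comm τ R, ← Nat.mul_add,
      add_comm τ, Nat.mul_mod_mul_left]
  rw [hval, shiftR_mod, shiftR_add]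

theorem vecMul_shiftR {K R : ℕ} [NeZero K] [NeZero R] (g : Fin (K * R) → ZMod 2)
    (G : Matrix (Fin K) (Fin (K * R)) (ZMod 2))
    (hG : ∀ (i : Fin K) (j : Fin (K * R)), G i j = shiftR (R * i.val) g j)
    (U : Fin K → ZMod 2) (τ : ℕ) :
    Matrix.vecMul (shiftR τ U) G = shiftR (τ * R) (Matrix.vecMul U G) := by
  ext j
  simp only [Matrix.vecMul, dotProduct, shiftR_apply]
  refine (Fintype.sum_equiv (Equiv.addRight (τ : Fin K)) _ _ fun i => ?_).symm
  rw [Equiv.coe_addRight, add_sub_cancel_right, hG, hG, shiftR_mul_val_add, shiftR_apply (τ * R)]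

theorem stmt6_general {K R : ℕ}
    (g : Fin (K * R) → ZMod 2)
    (G : Matrix (Fin K) (Fin (K * R)) (ZMod 2))
    (hG : ∀ (i : Fin K) (j : Fin (K * R)), G i j = shiftR (R * i.val) g j)
    (E : (Fin K → ZMod 2) → (Fin (K * R) → ZMod 2))
    (hE : ∀ U, E U = Matrix.vecMul U G)
    (UA UB : Fin K → ZMod 2) (τ : ℕ) :
    E UA + shiftR (τ * R) (E UB) = E (UA + shiftR τ UB) := by
  rcases eq_or_ne (K * R) 0 with hKR | hKR
  · funext j
    exact absurd j.isLt (by omega)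
  obtain ⟨hK, hR⟩ := mul_ne_zero_iff.mp hKR
  have : NeZero K := ⟨hK⟩
  have : NeZero R := ⟨hR⟩
  simp only [hE, Matrix.add_vecMul, vecMul_shiftR g G hG]

/-- With integral symbol misalignment `τ`, the XOR of node A's codeword with the
`τ*R`-bit right circularly shifted version of node B's codeword is a valid codeword
of the tail-biting convolutional code, with source packet `U^A ⊕ U^B_{(τ)}`. -/
theorem stmt6 {K R : ℕ} (hK : 1 ≤ K) (hR : 1 ≤ R)
    (g : Fin (K * R) → ZMod 2)
    (G : Matrix (Fin K) (Fin (K * R)) (ZMod 2))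
    (hG : ∀ (i : Fin K) (j : Fin (K * R)), G i j = shiftR (R * i.val) g j)
    (E : (Fin K → ZMod 2) → (Fin (K * R) → ZMod 2))
    (hE : ∀ U, E U = Matrix.vecMul U G)
    (UA UB : Fin K → ZMod 2) (τ : ℕ) :
    E UA + shiftR (τ * R) (E UB) = E (UA + shiftR τ UB) :=
  stmt6_general g G hG E hE UA UB τ
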